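/- arXiv:1105.4212 — 2 statements merged into one kernel-verified Lean document; each statement's English description precedes it below -/
import Mathlib

section
/- Let α = (α_1,…,α_k) be a composition such that for some index i the pair of consecutive parts (α_i, α_{i+1}) does not belong to {(m,1) : m ≥ 1} ∪ {(1,2), (2,2), (2,3), (1,3)}. Then there exist two standard composition tableaux T', T'' of shape α with com(T') ≠ α, com(T'') ≠ α, and com(T') ≠ com(T''). -/
/-- `SCTChain α U`: the filling `U` of the diagram of the composition `α`
(cells `0`-indexed, rows numbered from the top) arises from a saturated chain
in the poset `L_C` of compositions, where at each cover step either a new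
part `1` is prepended or the leftmost part of a given size is increased by
`1`, and the cell created at the step reaching a composition of size `s` is
filled with `s`. -/
inductive SCTChain : List ℕ → ((ℕ × ℕ) → ℕ) → Prop
  | nil : SCTChain [] (fun _ => 0)
  | prepend {β : List ℕ} {U : (ℕ × ℕ) → ℕ} (h : SCTChain β U) :
      SCTChain (1 :: β)
        (fun c => if c = (0, 0) then β.sum + 1
          else if c.1 = 0 then 0 else U (c.1 - 1, c.2))
  | grow {β : List ℕ} {U : (ℕ × ℕ) → ℕ} (h : SCTChain β U) (i : ℕ)
      (hi : i < β.length) (hleft : ∀ j < i, β.getD j 0 ≠ β.getD i 0) :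
      SCTChain (β.set i (β.getD i 0 + 1))
        (fun c => if c = (i, β.getD i 0) then β.sum + 1 else U c)

/-- `T` is a standard composition tableau of shape `α ⊨ n`: the filling of
the diagram of `α` obtained from a saturated chain
`∅ = α^{n+1} ⋖ ⋯ ⋖ α^1 = α` in `L_C` by placing entry `i` in the cell in
which `α^i` differs from `α^{i+1}` (so the cell created at the step reaching
size `s` receives the entry `n + 1 - s`); entries are `0` off the diagram. -/
def IsSCT (α : List ℕ) (T : (ℕ × ℕ) → ℕ) : Prop :=
  ∃ U, SCTChain α U ∧ T = fun c => if U c = 0 then 0 else α.sum + 1 - U c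

/-- The descent set of a standard composition tableau: those `i` such that
the entry `i+1` lies in a cell weakly to the right of the cell containing
`i`. -/
def desC (T : (ℕ × ℕ) → ℕ) : Set ℕ :=
  {i | 0 < i ∧ ∃ p q : ℕ × ℕ, T p = i ∧ T q = i + 1 ∧ p.2 ≤ q.2}

/-- `set(α) = {α₁, α₁+α₂, …, α₁+⋯+α_{ℓ(α)-1}}`, the subset of `[n-1]`
associated to a composition `α ⊨ n`; `com(T) = β` iff `desC T = compToSet β`. -/
def compToSet (α : List ℕ) : Set ℕ :=
  {s | ∃ i, 0 < i ∧ i < α.length ∧ s = (α.take i).sum}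

/-- The quasisymmetric Schur function `S_α` is F-multiplicity free iff all
standard composition tableaux of shape `α` have pairwise distinct descent
sets. -/
def FmfSCT (α : List ℕ) : Prop :=
  ∀ T T', IsSCT α T → IsSCT α T' → desC T = desC T' → T = T'

/-!
Write `α = δ ++ a :: b :: ρ` with `(a, b) = (αᵢ, αᵢ₊₁)`. Both tableaux come from chains
that first build `ρ`, then two short rows `x :: y` on top of it, then grow these rows to `b`
and `a`, and finally put `δ` on top. These later stages keep the step at which each existing
cell was created; putting `δ` on top only moves those cells down. Since the cell created at
step `s` gets the entry `|α| + 1 - s`, the entry `|α| - s` is a descent exactly when the cell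
created at step `s + 1` lies weakly left of the one created at step `s`. For
`ρ.sum < s < ρ.sum + a + b` this entry lies strictly between `δ.sum` and `δ.sum + a + b`, where
`set(α)` only contains `δ.sum + a`. So in each of the cases `b ≥ 4`, `b = 2 < a`, `b = 3 ≤ a` it
suffices to pick two of five explicit two-row prefixes with suitable descents and non-descents.
-/

theorem List.sum_set_getD_add_one {β : List ℕ} {i : ℕ} (hi : i < β.length) :
    (β.set i (β.getD i 0 + 1)).sum = β.sum + 1 := by
  have h := List.sum_set β i β[i]
  rw [List.set_getElem_self, if_pos hi] at h
  rw [List.sum_set, if_pos hi, h, List.getD_eq_getElem _ _ hi]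
  omega

theorem List.eq_take_append_getD_cons_getD_cons_drop {α : Type*} (l : List α) (d : α) {i : ℕ}
    (hi : i + 1 < l.length) :
    l = l.take i ++ l.getD i d :: l.getD (i + 1) d :: l.drop (i + 2) := by
  have hi' : i < l.length := by omega
  rw [List.getD_eq_getElem _ _ hi', List.getD_eq_getElem _ _ hi, ← List.drop_eq_getElem_cons hi,
    ← List.drop_eq_getElem_cons hi', List.take_append_drop]

def IsDescentStep (U : ℕ × ℕ → ℕ) (s : ℕ) : Prop :=
  ∃ c₁ c₂ : ℕ × ℕ, U c₁ = s + 1 ∧ U c₂ = s ∧ c₁.2 ≤ c₂.2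

def IsAscentStep (U : ℕ × ℕ → ℕ) (s : ℕ) : Prop :=
  ∃ c₁ c₂ : ℕ × ℕ, U c₁ = s + 1 ∧ U c₂ = s ∧ c₂.2 < c₁.2

def tableauOfChain (n : ℕ) (U : ℕ × ℕ → ℕ) : ℕ × ℕ → ℕ :=
  fun c => if U c = 0 then 0 else n + 1 - U c

section Shift

variable {U U' : ℕ × ℕ → ℕ} {s k : ℕ}

theorem IsDescentStep.shift (hd : IsDescentStep U s) (hs : 0 < s)
    (hU : ∀ r c, U (r, c) ≠ 0 → U' (r + k, c) = U (r, c)) : IsDescentStep U' s := by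
  obtain ⟨⟨r₁, c₁⟩, ⟨r₂, c₂⟩, h₁, h₂, hc⟩ := hd
  exact ⟨(r₁ + k, c₁), (r₂ + k, c₂), by rw [hU _ _ (by omega), h₁], by rw [hU _ _ (by omega), h₂],
    hc⟩

theorem IsAscentStep.shift (ha : IsAscentStep U s) (hs : 0 < s)
    (hU : ∀ r c, U (r, c) ≠ 0 → U' (r + k, c) = U (r, c)) : IsAscentStep U' s := by
  obtain ⟨⟨r₁, c₁⟩, ⟨r₂, c₂⟩, h₁, h₂, hc⟩ := ha
  exact ⟨(r₁ + k, c₁), (r₂ + k, c₂), by rw [hU _ _ (by omega), h₁], by rw [hU _ _ (by omega), h₂],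
    hc⟩

end Shift

namespace SCTChain

variable {β : List ℕ} {U : ℕ × ℕ → ℕ}

theorem le_sum (h : SCTChain β U) (c : ℕ × ℕ) : U c ≤ β.sum := by
  induction h generalizing c with
  | nil => simp
  | prepend h ih =>
    have := ih (c.1 - 1, c.2)
    simp only [List.sum_cons]
    split_ifs <;> omega
  | grow h i hi hleft ih =>
    have := ih c
    simp only [List.sum_set_getD_add_one hi]
    split_ifs <;> omega

theorem eq_zero_of_le (h : SCTChain β U) {c : ℕ × ℕ} (hc : β.getD c.1 0 ≤ c.2) : U c = 0 := by
  induction h generalizing c with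
  | nil => rfl
  | prepend h ih =>
    obtain ⟨_ | r, col⟩ := c
    · simp only [List.getD_cons_zero] at hc
      simp [show col ≠ 0 by omega]
    · simpa using ih (by simpa using hc)
  | @grow β U h i hi hleft ih =>
    obtain ⟨r, col⟩ := c
    have hrow : β.getD r 0 ≤ (β.set i (β.getD i 0 + 1)).getD r 0 := by
      simp only [List.getD_eq_getElem?_getD, List.getElem?_set]
      split_ifs <;> simp_all
    have hnew : (r, col) ≠ (i, β.getD i 0) := by
      rintro ⟨rfl, rfl⟩
      simp [hi] at hc
    simp only [if_neg hnew]
    exact ih (c := (r, col)) (hrow.trans hc)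

theorem injOn_support (h : SCTChain β U) : Set.InjOn U (Function.support U) := by
  induction h with
  | nil => simp
  | @prepend β U h ih =>
    have hle := h.le_sum
    rintro ⟨_ | r, x⟩ hp ⟨_ | r', x'⟩ hq hpq
    all_goals simp only [Function.mem_support, ne_eq] at hp hq
    all_goals simp at hp hq hpq ⊢
    · omega
    · have := hle (r', x'); split_ifs at hpq; omega
    · have := hle (r, x); split_ifs at hpq; omega
    · simpa using ih hp hq hpq
  | @grow β U h i hi hleft ih =>
    have hle := h.le_sum
    intro p hp q hq hpq
    simp only [Function.mem_support, ne_eq] at hp hq hpq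
    split_ifs at hp hq hpq with hp' hq'
    · rw [hp', hq']
    · have := hle q; omega
    · have := hle p; omega
    · exact ih hp hq hpq

theorem exists_grow (h : SCTChain β U) {i : ℕ} (hi : i < β.length) {m : ℕ}
    (hleft : ∀ j < i, ∀ k < m, β.getD j 0 ≠ β.getD i 0 + k) :
    ∃ U', SCTChain (β.set i (β.getD i 0 + m)) U' ∧ ∀ c, U c ≠ 0 → U' c = U c := by
  induction m with
  | zero =>
    exact ⟨U, by rwa [add_zero, List.getD_eq_getElem _ _ hi, List.set_getElem_self],
      fun _ _ => rfl⟩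
  | succ m ih =>
    obtain ⟨U', h', hU'⟩ := ih fun j hj k hk => hleft j hj k (by omega)
    have hrow_i : (β.set i (β.getD i 0 + m)).getD i 0 = β.getD i 0 + m := by simp [hi]
    have hrow_j : ∀ j < i, (β.set i (β.getD i 0 + m)).getD j 0 = β.getD j 0 := by
      intro j hj
      simp [hj.ne']
    have h'' := h'.grow i (by simpa using hi) fun j hj => by
      rw [hrow_j j hj, hrow_i]
      exact hleft j hj m (by omega)
    rw [hrow_i, List.set_set, add_assoc] at h''
    refine ⟨_, h'', fun c hc => ?_⟩
    have hnew : c ≠ (i, β.getD i 0 + m) := by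
      rintro rfl
      exact hc (by rw [← hU' _ hc]; exact h'.eq_zero_of_le hrow_i.le)
    simp only [if_neg hnew, hU' c hc]

theorem exists_append (h : SCTChain β U) {δ : List ℕ} (hδ : ∀ y ∈ δ, 0 < y) :
    ∃ U', SCTChain (δ ++ β) U' ∧ ∀ r c, U (r, c) ≠ 0 → U' (r + δ.length, c) = U (r, c) := by
  induction δ with
  | nil => exact ⟨U, h, fun _ _ _ => rfl⟩
  | cons y δ ih =>
    obtain ⟨U₁, h₁, hU₁⟩ := ih fun z hz => hδ z (List.mem_cons_of_mem y hz)
    obtain ⟨U₂, h₂, hU₂⟩ := h₁.prepend.exists_grow (i := 0) (m := y - 1) (by simp) (by simp)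
    have hy : 1 + (y - 1) = y := by have := hδ y List.mem_cons_self; omega
    refine ⟨U₂, by simpa [hy] using h₂, fun r c hc => ?_⟩
    have hprep : (r + (δ.length + 1), c) ≠ ((0 : ℕ), (0 : ℕ)) := by simp
    rw [List.length_cons, hU₂ _ (by simpa [hprep, hU₁ r c hc] using hc)]
    simpa [hprep] using hU₁ r c hc

theorem exists_of_forall_pos {ρ : List ℕ} (hρ : ∀ y ∈ ρ, 0 < y) : ∃ U, SCTChain ρ U := by
  obtain ⟨U, h, -⟩ := SCTChain.nil.exists_append hρ
  exact ⟨U, by simpa using h⟩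

/-- Row `1` can only grow from `y` to `b` if row `0` never has the same length on the way. -/
theorem exists_completion {ρ δ : List ℕ} {x y a b : ℕ} (h : SCTChain (x :: y :: ρ) U)
    (hδ : ∀ z ∈ δ, 0 < z) (hxa : x ≤ a) (hyb : y ≤ b) (hxy : x < y ∨ b ≤ x) :
    ∃ U', SCTChain (δ ++ a :: b :: ρ) U' ∧
      ∀ r c, U (r, c) ≠ 0 → U' (r + δ.length, c) = U (r, c) := by
  obtain ⟨U₁, h₁, hU₁⟩ := h.exists_grow (i := 1) (m := b - y) (by simp) fun j hj k hk => by
    obtain rfl : j = 0 := by omega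
    simp only [List.getD_cons_zero, List.getD_cons_succ]
    omega
  replace h₁ : SCTChain (x :: b :: ρ) U₁ := by simpa [show y + (b - y) = b by omega] using h₁
  obtain ⟨U₂, h₂, hU₂⟩ := h₁.exists_grow (i := 0) (m := a - x) (by simp) (by simp)
  replace h₂ : SCTChain (a :: b :: ρ) U₂ := by simpa [show x + (a - x) = a by omega] using h₂
  obtain ⟨U₃, h₃, hU₃⟩ := h₂.exists_append hδ
  refine ⟨U₃, h₃, fun r c hc => ?_⟩
  have h₁rc := hU₁ _ hc
  have h₂rc := hU₂ _ (h₁rc ▸ hc)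
  rw [hU₃ r c (h₂rc ▸ h₁rc ▸ hc), h₂rc, h₁rc]

section Prefixes

variable {ρ : List ℕ}

theorem exists_one_two_cons (h : SCTChain ρ U) :
    ∃ U', SCTChain (1 :: 2 :: ρ) U' ∧ IsDescentStep U' (ρ.sum + 2) :=
  ⟨_, (h.prepend.grow 0 (by simp) (by simp)).prepend,
    (0, 0), (1, 1), by simp; omega, by simp; omega, by decide⟩

theorem exists_one_three_cons (h : SCTChain ρ U) :
    ∃ U', SCTChain (1 :: 3 :: ρ) U' ∧ IsDescentStep U' (ρ.sum + 3) ∧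
      IsAscentStep U' (ρ.sum + 2) :=
  ⟨_, ((h.prepend.grow 0 (by simp) (by simp)).grow 0 (by simp) (by simp)).prepend,
    ⟨(0, 0), (1, 2), by simp; omega, by simp; omega, by decide⟩,
    ⟨(1, 2), (1, 1), by simp; omega, by simp; omega, by decide⟩⟩

theorem exists_two_two_cons (h : SCTChain ρ U) :
    ∃ U', SCTChain (2 :: 2 :: ρ) U' ∧ IsDescentStep U' (ρ.sum + 3) :=
  ⟨_, (h.prepend.prepend.grow 0 (by simp) (by simp)).grow 1 (by simp) (by simp),
    (1, 1), (0, 1), by simp; omega, by simp; omega, by decide⟩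

theorem exists_three_two_cons (h : SCTChain ρ U) :
    ∃ U', SCTChain (3 :: 2 :: ρ) U' ∧ IsDescentStep U' (ρ.sum + 4) ∧
      IsAscentStep U' (ρ.sum + 3) :=
  ⟨_, ((h.prepend.prepend.grow 0 (by simp) (by simp)).grow 0 (by simp) (by simp)).grow 1
      (by simp) (by simp),
    ⟨(1, 1), (0, 2), by simp; omega, by simp; omega, by decide⟩,
    ⟨(0, 2), (0, 1), by simp; omega, by simp; omega, by decide⟩⟩

theorem exists_three_three_cons (h : SCTChain ρ U) :
    ∃ U', SCTChain (3 :: 3 :: ρ) U' ∧ IsDescentStep U' (ρ.sum + 1) ∧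
      IsAscentStep U' (ρ.sum + 2) :=
  ⟨_, (((h.prepend.prepend.grow 0 (by simp) (by simp)).grow 1 (by simp) (by simp)).grow 0
      (by simp) (by simp)).grow 1 (by simp) (by simp),
    ⟨(0, 0), (1, 0), by simp; omega, by simp, by decide⟩,
    ⟨(0, 1), (0, 0), by simp; omega, by simp; omega, by decide⟩⟩

end Prefixes

section Descents

variable {α : List ℕ} {s : ℕ}

theorem isSCT_tableauOfChain (h : SCTChain α U) : IsSCT α (tableauOfChain α.sum U) :=
  ⟨U, h, rfl⟩

theorem sub_mem_desC_iff (h : SCTChain α U) (hs : 0 < s) (hsn : s < α.sum) :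
    α.sum - s ∈ desC (tableauOfChain α.sum U) ↔ IsDescentStep U s := by
  constructor
  · rintro ⟨-, p, q, hp, hq, hpq⟩
    have := h.le_sum p
    have := h.le_sum q
    simp only [tableauOfChain] at hp hq
    split_ifs at hp hq
    · omega
    · exact ⟨p, q, by omega, by omega, hpq⟩
  · rintro ⟨p, q, hp, hq, hpq⟩
    refine ⟨Nat.sub_pos_of_lt hsn, p, q, ?_, ?_, hpq⟩
    · rw [tableauOfChain, hp, if_neg (Nat.add_one_ne_zero s)]
      omega
    · rw [tableauOfChain, hq, if_neg hs.ne']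
      omega

theorem not_isDescentStep (h : SCTChain α U) (hs : 0 < s) (ha : IsAscentStep U s) :
    ¬IsDescentStep U s := by
  obtain ⟨c₁, c₂, h₁, h₂, hc⟩ := ha
  rintro ⟨d₁, d₂, h₁', h₂', hd⟩
  have e₁ : d₁ = c₁ := h.injOn_support (by simp [h₁']) (by simp [h₁]) (h₁'.trans h₁.symm)
  have e₂ : d₂ = c₂ :=
    h.injOn_support (by simp [h₂']; omega) (by simp [h₂]; omega) (h₂'.trans h₂.symm)
  subst e₁ e₂
  omega

end Descents

end SCTChain

theorem sum_add_not_mem_compToSet {δ ρ : List ℕ} {a b d : ℕ} (hd : 0 < d) (hdab : d < a + b)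
    (hda : d ≠ a) : δ.sum + d ∉ compToSet (δ ++ a :: b :: ρ) := by
  rintro ⟨j, -, -, hj⟩
  have hle : (δ.take j).sum ≤ δ.sum := (δ.take_sublist j).sum_le_sum (by simp)
  rw [List.take_append, List.sum_append] at hj
  generalize hk : j - δ.length = k at hj
  rcases k with _ | _ | k
  · simp at hj
    omega
  · rw [List.take_of_length_le (by omega)] at hj
    simp at hj
    omega
  · rw [List.take_of_length_le (by omega)] at hj
    simp at hj
    omega

theorem exists_two_sct_of_isDescentStep {δ ρ : List ℕ} {a b t t' : ℕ} {U U' : ℕ × ℕ → ℕ}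
    (h : SCTChain (δ ++ a :: b :: ρ) U) (h' : SCTChain (δ ++ a :: b :: ρ) U')
    (hd : IsDescentStep U (ρ.sum + t)) (hd' : IsDescentStep U' (ρ.sum + t'))
    (ha' : IsAscentStep U' (ρ.sum + t))
    (ht : 0 < t ∧ t < a + b ∧ t ≠ b) (ht' : 0 < t' ∧ t' < a + b ∧ t' ≠ b) :
    ∃ T' T'', IsSCT (δ ++ a :: b :: ρ) T' ∧ IsSCT (δ ++ a :: b :: ρ) T'' ∧
      desC T' ≠ compToSet (δ ++ a :: b :: ρ) ∧ desC T'' ≠ compToSet (δ ++ a :: b :: ρ) ∧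
      desC T' ≠ desC T'' := by
  have hsum : (δ ++ a :: b :: ρ).sum = δ.sum + a + b + ρ.sum := by simp; omega
  have hcomp : ∀ t, 0 < t ∧ t < a + b ∧ t ≠ b →
      (δ ++ a :: b :: ρ).sum - (ρ.sum + t) ∉ compToSet (δ ++ a :: b :: ρ) := by
    intro t ht
    rw [hsum, show δ.sum + a + b + ρ.sum - (ρ.sum + t) = δ.sum + (a + b - t) by omega]
    exact sum_add_not_mem_compToSet (by omega) (by omega) (by omega)
  have hmem := (h.sub_mem_desC_iff (by omega) (by omega)).2 hd
  have hmem' := (h'.sub_mem_desC_iff (by omega) (by omega)).2 hd'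
  have hnot : (δ ++ a :: b :: ρ).sum - (ρ.sum + t) ∉ desC (tableauOfChain _ U') := fun hm =>
    h'.not_isDescentStep (by omega) ha' ((h'.sub_mem_desC_iff (by omega) (by omega)).1 hm)
  exact ⟨_, _, h.isSCT_tableauOfChain, h'.isSCT_tableauOfChain, fun e => hcomp t ht (e ▸ hmem),
    fun e => hcomp t' ht' (e ▸ hmem'), fun e => hnot (e ▸ hmem)⟩

theorem exists_two_sct_of_prefixes {δ ρ : List ℕ} {a b x y x' y' t t' : ℕ}
    {U U' : ℕ × ℕ → ℕ} (hδ : ∀ z ∈ δ, 0 < z)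
    (h : SCTChain (x :: y :: ρ) U) (hd : IsDescentStep U (ρ.sum + t))
    (h' : SCTChain (x' :: y' :: ρ) U') (hd' : IsDescentStep U' (ρ.sum + t'))
    (ha' : IsAscentStep U' (ρ.sum + t))
    (hxy : x ≤ a ∧ y ≤ b ∧ (x < y ∨ b ≤ x)) (hxy' : x' ≤ a ∧ y' ≤ b ∧ (x' < y' ∨ b ≤ x'))
    (ht : 0 < t ∧ t < a + b ∧ t ≠ b) (ht' : 0 < t' ∧ t' < a + b ∧ t' ≠ b) :
    ∃ T' T'', IsSCT (δ ++ a :: b :: ρ) T' ∧ IsSCT (δ ++ a :: b :: ρ) T'' ∧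
      desC T' ≠ compToSet (δ ++ a :: b :: ρ) ∧ desC T'' ≠ compToSet (δ ++ a :: b :: ρ) ∧
      desC T' ≠ desC T'' := by
  obtain ⟨V, hV, hUV⟩ := h.exists_completion hδ hxy.1 hxy.2.1 hxy.2.2
  obtain ⟨V', hV', hUV'⟩ := h'.exists_completion hδ hxy'.1 hxy'.2.1 hxy'.2.2
  exact exists_two_sct_of_isDescentStep hV hV' (hd.shift (by omega) hUV)
    (hd'.shift (by omega) hUV') (ha'.shift (by omega) hUV') ht ht'

/-- If some pair of consecutive parts `(αᵢ, αᵢ₊₁)` of the composition `α`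
does not belong to `{(m,1) : m ≥ 1} ∪ {(1,2), (2,2), (2,3), (1,3)}`, then
there are two standard composition tableaux `T'`, `T''` of shape `α` with
`com(T') ≠ α`, `com(T'') ≠ α` and `com(T') ≠ com(T'')`. -/
theorem exists_two_sct_with_other_descent_comps (α : List ℕ)
    (hpos : ∀ x ∈ α, 0 < x) (i : ℕ) (hi : i + 1 < α.length)
    (hpair : ¬(α.getD (i + 1) 0 = 1 ∨
      (α.getD i 0 = 1 ∧ α.getD (i + 1) 0 = 2) ∨
      (α.getD i 0 = 2 ∧ α.getD (i + 1) 0 = 2) ∨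
      (α.getD i 0 = 2 ∧ α.getD (i + 1) 0 = 3) ∨
      (α.getD i 0 = 1 ∧ α.getD (i + 1) 0 = 3))) :
    ∃ T' T'', IsSCT α T' ∧ IsSCT α T'' ∧
      desC T' ≠ compToSet α ∧ desC T'' ≠ compToSet α ∧ desC T' ≠ desC T'' := by
  have hα := α.eq_take_append_getD_cons_getD_cons_drop 0 hi
  generalize α.getD i 0 = a, α.getD (i + 1) 0 = b at hα hpair
  generalize α.take i = δ, α.drop (i + 2) = ρ at hα
  subst hα
  have hδ : ∀ z ∈ δ, 0 < z := fun z hz => hpos z (by simp [hz])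
  have ha : 0 < a := hpos a (by simp)
  have hb : 0 < b := hpos b (by simp)
  obtain ⟨U, hU⟩ := SCTChain.exists_of_forall_pos (ρ := ρ) fun z hz => hpos z (by simp [hz])
  obtain ⟨U₁₂, h₁₂, hd₁₂⟩ := hU.exists_one_two_cons
  obtain ⟨U₁₃, h₁₃, hd₁₃, ha₁₃⟩ := hU.exists_one_three_cons
  obtain ⟨U₂₂, h₂₂, hd₂₂⟩ := hU.exists_two_two_cons
  obtain ⟨U₃₂, h₃₂, hd₃₂, ha₃₂⟩ := hU.exists_three_two_cons
  obtain ⟨U₃₃, h₃₃, hd₃₃, ha₃₃⟩ := hU.exists_three_three_cons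
  rcases (show 4 ≤ b ∨ (b = 2 ∧ 3 ≤ a) ∨ (b = 3 ∧ 3 ≤ a) by omega) with
    hb4 | ⟨rfl, ha⟩ | ⟨rfl, ha⟩
  · exact exists_two_sct_of_prefixes hδ h₁₂ hd₁₂ h₁₃ hd₁₃ ha₁₃
      (by omega) (by omega) (by omega) (by omega)
  · exact exists_two_sct_of_prefixes hδ h₂₂ hd₂₂ h₃₂ hd₃₂ ha₃₂
      (by omega) (by omega) (by omega) (by omega)
  · exact exists_two_sct_of_prefixes hδ h₁₂ hd₁₂ h₃₃ hd₃₃ ha₃₃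
      (by omega) (by omega) (by omega) (by omega)
end

section
/- Let n ≥ 8. Then there exist two distinct standard composition tableaux of shape (3, n−3) both having descent set {2, 5}; hence F_{set^{−1}({2,5})} appears with multiplicity at least 2 in the fundamental expansion of S_{(3,n−3)}, and S_{(3,n−3)} is not F-multiplicity free. -/
/-! Write `n = m + 6`. The two tableaux begin their bottom row with `m + 6, m + 5, …, 6` and
differ only in where `1, …, 5` sit:

    5 2 1                           5 4 2
    m+6 ⋯ 6 4 3                     m+6 ⋯ 6 3 1

In each, `3` and `6` lie weakly right of `2` and `5` respectively, while every other `i + 1`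
lies strictly left of `i`. Each is produced by a chain in `L_C` that adds the entries in
decreasing order; the only delicate cover steps grow the second part, which is allowed only
while it differs from the first part, and this is where `n ≥ 8` enters. -/

namespace SCTChain

theorem congr_filling {α : List ℕ} {U U' : (ℕ × ℕ) → ℕ} (h : SCTChain α U)
    (hU : ∀ c, U c = U' c) : SCTChain α U' :=
  funext hU ▸ h

theorem grow_head {a : ℕ} {β : List ℕ} {U : (ℕ × ℕ) → ℕ} (h : SCTChain (a :: β) U) :
    SCTChain ((a + 1) :: β) (fun c => if c = (0, a) then a + β.sum + 1 else U c) := by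
  simpa using h.grow 0 (by simp) (by simp)

theorem grow_second {a b : ℕ} {U : (ℕ × ℕ) → ℕ} (hab : a ≠ b) (h : SCTChain [a, b] U) :
    SCTChain [a, b + 1] (fun c => if c = (1, b) then a + b + 1 else U c) := by
  simpa [add_assoc] using h.grow 1 (by simp) (by simpa using hab)

theorem prepend_row {b : ℕ} {U : (ℕ × ℕ) → ℕ} (h : SCTChain [b] U) :
    SCTChain [1, b] (fun c => if c = (0, 0) then b + 1
      else if c.1 = 0 then 0 else U (c.1 - 1, c.2)) := by
  simpa using h.prepend

theorem row (m : ℕ) : SCTChain [m + 1] (fun c => if c.1 = 0 ∧ c.2 ≤ m then c.2 + 1 else 0) := by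
  induction m with
  | zero =>
    refine nil.prepend.congr_filling fun ⟨a, b⟩ => ?_
    simp only [Prod.mk.injEq, List.sum_nil]
    split_ifs <;> omega
  | succ m ih =>
    refine ih.grow_head.congr_filling fun ⟨a, b⟩ => ?_
    simp only [Prod.mk.injEq, List.sum_nil]
    split_ifs <;> omega

end SCTChain

theorem IsSCT.of_chain {α : List ℕ} {U T : (ℕ × ℕ) → ℕ} (h : SCTChain α U)
    (hT : ∀ c, T c = if U c = 0 then 0 else α.sum + 1 - U c) : IsSCT α T :=
  ⟨U, h, funext hT⟩

theorem not_fmfSCT_of_ne {α : List ℕ} {T T' : (ℕ × ℕ) → ℕ} (hT : IsSCT α T)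
    (hT' : IsSCT α T') (hne : T ≠ T') (hdes : desC T = desC T') : ¬ FmfSCT α :=
  fun hF => hne (hF T T' hT hT' hdes)

def tableauA (m : ℕ) : (ℕ × ℕ) → ℕ := fun c =>
  if c = (0, 0) then 5
  else if c = (0, 1) then 2
  else if c = (0, 2) then 1
  else if c.1 = 1 ∧ c.2 ≤ m then m + 6 - c.2
  else if c = (1, m + 1) then 4
  else if c = (1, m + 2) then 3
  else 0

def tableauB (m : ℕ) : (ℕ × ℕ) → ℕ := fun c =>
  if c = (0, 0) then 5
  else if c = (0, 1) then 4
  else if c = (0, 2) then 2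
  else if c.1 = 1 ∧ c.2 ≤ m then m + 6 - c.2
  else if c = (1, m + 1) then 3
  else if c = (1, m + 2) then 1
  else 0

theorem isSCT_tableauA {m : ℕ} (hm : 1 ≤ m) : IsSCT [3, m + 3] (tableauA m) := by
  have h := (SCTChain.row m).prepend_row
    |>.grow_second (by omega) |>.grow_second (by omega) |>.grow_head |>.grow_head
  refine IsSCT.of_chain h fun ⟨a, b⟩ => ?_
  simp only [tableauA, Prod.mk.injEq, List.sum_cons, List.sum_nil]
  split_ifs <;> first | omega | contradiction

theorem isSCT_tableauB {m : ℕ} (hm : 2 ≤ m) : IsSCT [3, m + 3] (tableauB m) := by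
  have h := (SCTChain.row m).prepend_row
    |>.grow_head |>.grow_second (by omega) |>.grow_head |>.grow_second (by omega)
  refine IsSCT.of_chain h fun ⟨a, b⟩ => ?_
  simp only [tableauB, Prod.mk.injEq, List.sum_cons, List.sum_nil]
  split_ifs <;> first | omega | contradiction

theorem tableauA_ne_tableauB (m : ℕ) : tableauA m ≠ tableauB m := fun h => by
  simpa [tableauA, tableauB] using congrFun h (0, 1)

theorem desC_tableauA (m : ℕ) : desC (tableauA m) = {2, 5} := by
  ext i
  simp only [desC, Set.mem_ofPred_eq, Set.mem_insert_iff, Set.mem_singleton_iff]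
  constructor
  · rintro ⟨hi, ⟨a, b⟩, ⟨a', b'⟩, hp, hq, hle⟩
    simp only [tableauA, Prod.mk.injEq] at hp hq
    split_ifs at hp hq <;> omega
  · rintro (rfl | rfl)
    · exact ⟨by norm_num, (0, 1), (1, m + 2), by simp [tableauA], by simp [tableauA], by simp⟩
    · exact ⟨by norm_num, (0, 0), (1, m), by simp [tableauA], by simp [tableauA], by simp⟩

theorem desC_tableauB {m : ℕ} (hm : 1 ≤ m) : desC (tableauB m) = {2, 5} := by
  ext i
  simp only [desC, Set.mem_ofPred_eq, Set.mem_insert_iff, Set.mem_singleton_iff]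
  constructor
  · rintro ⟨hi, ⟨a, b⟩, ⟨a', b'⟩, hp, hq, hle⟩
    simp only [tableauB, Prod.mk.injEq] at hp hq
    split_ifs at hp hq <;> omega
  · rintro (rfl | rfl)
    · exact ⟨by norm_num, (0, 2), (1, m + 1), by simp [tableauB], by simp [tableauB], by simp; omega⟩
    · exact ⟨by norm_num, (0, 0), (1, m), by simp [tableauB], by simp [tableauB], by simp⟩

/-- For `n ≥ 8` there are two distinct standard composition tableaux of
shape `(3, n-3)` both having descent set `{2, 5}`; hence `F_{set⁻¹({2,5})}`
appears with multiplicity in `S_{(3,n-3)}`, which is therefore not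
F-multiplicity free. -/
theorem qs_three_row_multiplicity (n : ℕ) (hn : 8 ≤ n) :
    (∃ T T', IsSCT [3, n - 3] T ∧ IsSCT [3, n - 3] T' ∧ T ≠ T' ∧
      desC T = {2, 5} ∧ desC T' = {2, 5}) ∧ ¬ FmfSCT [3, n - 3] := by
  obtain ⟨m, hm, rfl⟩ : ∃ m, 2 ≤ m ∧ n = m + 6 := ⟨n - 6, by omega, by omega⟩
  rw [show m + 6 - 3 = m + 3 by omega]
  have hA : IsSCT [3, m + 3] (tableauA m) := isSCT_tableauA (by omega)
  have hB : IsSCT [3, m + 3] (tableauB m) := isSCT_tableauB hm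
  have hdesA := desC_tableauA m
  have hdesB : desC (tableauB m) = {2, 5} := desC_tableauB (by omega)
  exact ⟨⟨_, _, hA, hB, tableauA_ne_tableauB m, hdesA, hdesB⟩,
    not_fmfSCT_of_ne hA hB (tableauA_ne_tableauB m) (hdesA.trans hdesB.symm)⟩
end
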